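/- Let m, n ≥ 0, 1 ≤ k ≤ n be integers and b, b' > 0. Suppose α < C(n,k), where α = G^{m,n,k}_1(b,b')/G^{m,n}_1(b'). Then there exists a unique triple (α̃, β̃, λ) of reals with λ ∈ (0, b') solving the system: a₀(λ) = α̃ G^{m,n}_1(λ) + β̃, a₀'(λ) = α̃ (G^{m,n}_1)'(λ), and G^{m,n,k}_1(b, b') = α̃ G^{m,n}_1(b') + β̃, where a₀(x) = C(n,k) G^{m,n−k}_1(x). -/

import Mathlib

/-- `G^{m,n}_a(x) = ∫₀^x s^m (s+a)^n ds`. -/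
noncomputable def Gmn (m n : ℕ) (a x : ℝ) : ℝ :=
  ∫ s in (0 : ℝ)..x, s ^ m * (s + a) ^ n

/-- `G^{m,n,k}_1(f,x) = (1/k!) (d^k/dt^k)|_{t=0} G^{m,n}_{1+t}(x + t f)`. -/
noncomputable def Gmnk (m n k : ℕ) (f x : ℝ) : ℝ :=
  (1 / (Nat.factorial k : ℝ)) * iteratedDeriv k (fun t : ℝ => Gmn m n (1 + t) (x + t * f)) 0

/-!
For `λ > 0` the second equation forces `α̃ = C(n,k) / (λ+1)^k` and the first then fixes `β̃`,
so the system reduces to `F(λ) = G^{m,n,k}_1(b,b')`, where `F(λ)` is the value at `b'` of the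
combination `α̃ G + β̃` touching `a₀` at `λ`. Since
`F'(λ) = -k C(n,k) (G(b') - G(λ)) / (λ+1)^(k+1)`, `F` decreases strictly on `[0,b']` from
`C(n,k) G(b')` to `C(n,k) G^{m,n-k}_1(b')`. The hypothesis `α < C(n,k)` is the upper bound.
For the lower bound, `t ↦ G^{m,n}_{1+t}(b'+tb)` equals `∑ᵢ C(n,i) tⁱ G^{m,n-i}_1(b'+tb)`,
a polynomial whose `t^k`-coefficient is a sum of nonnegative Taylor terms of the `G^{m,n-i}_1`
at `b'`: the term `i = k` is `C(n,k) G^{m,n-k}_1(b')` and the term `i = k-1` is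
`C(n,k-1) b b'^m (b'+1)^(n-k+1) > 0`.
-/

open Finset Polynomial Set

lemma hasDerivAt_Gmn (m l : ℕ) (a x : ℝ) :
    HasDerivAt (Gmn m l a) (x ^ m * (x + a) ^ l) x :=
  ((by fun_prop : Continuous fun s : ℝ => s ^ m * (s + a) ^ l).integral_hasStrictDerivAt
    0 x).hasDerivAt

lemma Gmn_zero_right (m l : ℕ) (a : ℝ) : Gmn m l a 0 = 0 :=
  intervalIntegral.integral_same

lemma strictMonoOn_Gmn_one (m l : ℕ) : StrictMonoOn (Gmn m l 1) (Ici 0) := by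
  refine strictMonoOn_of_deriv_pos (convex_Ici 0)
    (fun x _ => (hasDerivAt_Gmn m l 1 x).continuousAt.continuousWithinAt) fun x hx => ?_
  rw [interior_Ici, Set.mem_Ioi] at hx
  rw [(hasDerivAt_Gmn m l 1 x).deriv]
  positivity

lemma Gmn_one_pos (m l : ℕ) {x : ℝ} (hx : 0 < x) : 0 < Gmn m l 1 x := by
  simpa [Gmn_zero_right] using strictMonoOn_Gmn_one m l (Set.mem_Ici.2 le_rfl) hx.le hx

lemma Gmn_add_eq_sum (m n : ℕ) (a t x : ℝ) :
    Gmn m n (a + t) x = ∑ i ∈ range (n + 1), (n.choose i : ℝ) * t ^ i * Gmn m (n - i) a x := by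
  have hexp (s : ℝ) : s ^ m * (s + (a + t)) ^ n
      = ∑ i ∈ range (n + 1), (n.choose i : ℝ) * t ^ i * (s ^ m * (s + a) ^ (n - i)) := by
    rw [← add_assoc, add_comm _ t, add_pow, mul_sum]
    exact sum_congr rfl fun i _ => by ring
  simp_rw [Gmn, hexp]
  rw [intervalIntegral.integral_finsetSum fun i _ => by
    exact (by fun_prop : Continuous _).intervalIntegrable _ _]
  simp_rw [intervalIntegral.integral_const_mul]

noncomputable def gmnPoly (m l : ℕ) : ℝ[X] :=
  ∑ j ∈ range (l + 1), C ((l.choose j : ℝ) / (m + j + 1)) * X ^ (m + j + 1)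

lemma eval_gmnPoly (m l : ℕ) (x : ℝ) : (gmnPoly m l).eval x = Gmn m l 1 x := by
  have hexp (s : ℝ) : s ^ m * (s + 1) ^ l
      = ∑ j ∈ range (l + 1), (l.choose j : ℝ) * s ^ (m + j) := by
    rw [add_pow, mul_sum]
    exact sum_congr rfl fun j _ => by ring
  simp_rw [Gmn, hexp]
  rw [intervalIntegral.integral_finsetSum fun j _ => by
    exact (by fun_prop : Continuous _).intervalIntegrable _ _, gmnPoly, eval_finsetSum]
  refine sum_congr rfl fun j _ => ?_
  rw [intervalIntegral.integral_const_mul, integral_pow]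
  simp only [eval_mul, eval_C, eval_pow, eval_X]
  push_cast
  ring

lemma coeff_gmnPoly_nonneg (m l d : ℕ) : 0 ≤ (gmnPoly m l).coeff d := by
  rw [gmnPoly, finsetSum_coeff]
  refine sum_nonneg fun j _ => ?_
  rw [coeff_C_mul_X_pow]
  split_ifs <;> positivity

lemma eval_nonneg_of_coeff_nonneg {R : Type*} [CommSemiring R] [PartialOrder R]
    [IsOrderedRing R] {p : R[X]} (hp : ∀ d, 0 ≤ p.coeff d) {x : R} (hx : 0 ≤ x) :
    0 ≤ p.eval x := by
  rw [eval_eq_sum_range]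
  exact sum_nonneg fun d _ => mul_nonneg (hp d) (pow_nonneg hx d)

lemma iteratedDeriv_eval (p : ℝ[X]) (k : ℕ) :
    iteratedDeriv k (fun x => p.eval x) = fun x => (derivative^[k] p).eval x := by
  induction k generalizing p with
  | zero => rfl
  | succ k ih =>
    rw [iteratedDeriv_succ', funext fun x => Polynomial.deriv p (x := x), ih,
      Function.iterate_succ_apply]

lemma coeff_eq_iteratedDeriv (p : ℝ[X]) (k : ℕ) :
    p.coeff k = 1 / (k.factorial : ℝ) * iteratedDeriv k (fun x => p.eval x) 0 := by
  rw [iteratedDeriv_eval]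
  beta_reduce
  rw [← coeff_zero_eq_eval_zero, coeff_iterate_derivative, zero_add,
    Nat.descFactorial_self, nsmul_eq_mul, ← mul_assoc, one_div,
    inv_mul_cancel₀ (by exact_mod_cast k.factorial_ne_zero), one_mul]

noncomputable def shiftedGmnPoly (m n : ℕ) (f x : ℝ) : ℝ[X] :=
  ∑ i ∈ range (n + 1), C (n.choose i : ℝ) * (X ^ i * (taylor x (gmnPoly m (n - i))).comp (C f * X))

lemma eval_shiftedGmnPoly (m n : ℕ) (f x t : ℝ) :
    (shiftedGmnPoly m n f x).eval t = Gmn m n (1 + t) (x + t * f) := by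
  rw [Gmn_add_eq_sum, shiftedGmnPoly, eval_finsetSum]
  refine sum_congr rfl fun i _ => ?_
  simp only [eval_mul, eval_C, eval_pow, eval_X, eval_comp, taylor_eval, eval_gmnPoly]
  ring_nf

lemma Gmnk_eq_coeff_shiftedGmnPoly (m n k : ℕ) (f x : ℝ) :
    Gmnk m n k f x = (shiftedGmnPoly m n f x).coeff k := by
  rw [coeff_eq_iteratedDeriv, Gmnk, funext (eval_shiftedGmnPoly m n f x)]

lemma coeff_shiftedGmnPoly (m n k : ℕ) (f x : ℝ) :
    (shiftedGmnPoly m n f x).coeff k = ∑ i ∈ range (n + 1), (n.choose i : ℝ) *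
      if i ≤ k then (hasseDeriv (k - i) (gmnPoly m (n - i))).eval x * f ^ (k - i) else 0 := by
  rw [shiftedGmnPoly, finsetSum_coeff]
  simp only [coeff_C_mul, coeff_X_pow_mul', comp_C_mul_X_coeff, taylor_coeff]

lemma eval_derivative_gmnPoly (m l : ℕ) (x : ℝ) :
    (derivative (gmnPoly m l)).eval x = x ^ m * (x + 1) ^ l := by
  rw [← Polynomial.deriv, funext (eval_gmnPoly m l), (hasDerivAt_Gmn m l 1 x).deriv]

lemma choose_mul_Gmn_lt_Gmnk {m n k : ℕ} (hk : 1 ≤ k) (hkn : k ≤ n) {f x : ℝ} (hf : 0 < f)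
    (hx : 0 < x) : n.choose k * Gmn m (n - k) 1 x < Gmnk m n k f x := by
  rw [Gmnk_eq_coeff_shiftedGmnPoly, coeff_shiftedGmnPoly]
  set T : ℕ → ℝ := fun i => (n.choose i : ℝ) *
    if i ≤ k then (hasseDeriv (k - i) (gmnPoly m (n - i))).eval x * f ^ (k - i) else 0
  have hT : ∀ i, 0 ≤ T i := fun i => by
    refine mul_nonneg (Nat.cast_nonneg _) ?_
    split_ifs
    · refine mul_nonneg (eval_nonneg_of_coeff_nonneg (fun d => ?_) hx.le) (pow_nonneg hf.le _)
      rw [hasseDeriv_coeff]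
      exact mul_nonneg (Nat.cast_nonneg _) (coeff_gmnPoly_nonneg _ _ _)
    · exact le_rfl
  have hTk : T k = n.choose k * Gmn m (n - k) 1 x := by
    simp [T, eval_gmnPoly]
  have hTk' : 0 < T (k - 1) := by
    have hkk : k - (k - 1) = 1 := by omega
    simp only [T, if_pos (Nat.sub_le k 1), hkk, hasseDeriv_one, eval_derivative_gmnPoly, pow_one]
    have : 0 < n.choose (k - 1) := Nat.choose_pos (by omega)
    positivity
  calc (n.choose k : ℝ) * Gmn m (n - k) 1 x < T (k - 1) + T k := by linarith
    _ = ∑ i ∈ {k - 1, k}, T i := (sum_pair (by omega)).symm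
    _ ≤ ∑ i ∈ range (n + 1), T i :=
      sum_le_sum_of_subset_of_nonneg (by intro i; simp; omega) fun i _ _ => hT i

/-- The value at `y` of the combination `α̃ G^{m,n}_1 + β̃` that touches `a₀` to first order
at `x`, i.e. with `α̃ = C(n,k) / (x+1)^k`. -/
noncomputable def tangentValue (m n k : ℕ) (y x : ℝ) : ℝ :=
  n.choose k * ((Gmn m n 1 y - Gmn m n 1 x) / (x + 1) ^ k + Gmn m (n - k) 1 x)

lemma hasDerivAt_tangentValue {m n k : ℕ} (hkn : k ≤ n) (y : ℝ) {x : ℝ} (hx : x + 1 ≠ 0) :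
    HasDerivAt (tangentValue m n k y)
      (-(n.choose k * k * (Gmn m n 1 y - Gmn m n 1 x) * (x + 1) ^ (k - 1)) / ((x + 1) ^ k) ^ 2)
      x := by
  have hpow := ((hasDerivAt_id x).add_const 1).pow k
  have h := ((((hasDerivAt_const x (Gmn m n 1 y)).sub (hasDerivAt_Gmn m n 1 x)).div hpow
    (pow_ne_zero k hx)).add (hasDerivAt_Gmn m (n - k) 1 x)).const_mul (n.choose k : ℝ)
  refine h.congr_deriv ?_
  rw [← pow_sub_mul_pow _ hkn]
  simp only [id, Pi.pow_apply, Pi.sub_apply]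
  field_simp
  ring

lemma continuousOn_tangentValue {m n k : ℕ} (hkn : k ≤ n) (y : ℝ) :
    ContinuousOn (tangentValue m n k y) (Ici 0) := fun x hx =>
  (hasDerivAt_tangentValue hkn y (by linarith [Set.mem_Ici.1 hx] : x + 1 ≠ 0)).continuousAt
    |>.continuousWithinAt

lemma strictAntiOn_tangentValue {m n k : ℕ} (hk : 1 ≤ k) (hkn : k ≤ n) (y : ℝ) :
    StrictAntiOn (tangentValue m n k y) (Icc 0 y) := by
  refine strictAntiOn_of_deriv_neg (convex_Icc 0 y)
    ((continuousOn_tangentValue hkn y).mono Icc_subset_Ici_self) fun x hx => ?_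
  rw [interior_Icc] at hx
  rw [(hasDerivAt_tangentValue hkn y (by linarith [hx.1] : x + 1 ≠ 0)).deriv]
  have hGx : 0 < Gmn m n 1 y - Gmn m n 1 x :=
    sub_pos.2 (strictMonoOn_Gmn_one m n hx.1.le (hx.1.trans hx.2).le hx.2)
  have hx1 : 0 < x + 1 := by linarith [hx.1]
  have : 0 < n.choose k := Nat.choose_pos hkn
  have : (0 : ℝ) < k := by exact_mod_cast hk
  apply div_neg_of_neg_of_pos _ (by positivity)
  rw [neg_lt_zero]
  positivity

lemma tangentValue_zero (m n k : ℕ) (y : ℝ) :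
    tangentValue m n k y 0 = n.choose k * Gmn m n 1 y := by
  simp [tangentValue, Gmn_zero_right]

lemma tangentValue_self (m n k : ℕ) (y : ℝ) :
    tangentValue m n k y y = n.choose k * Gmn m (n - k) 1 y := by
  simp [tangentValue]

lemma tangent_system_iff {m n k : ℕ} (hkn : k ≤ n) {y μ a β Γ : ℝ} (hμ : 0 < μ) :
    ((n.choose k : ℝ) * Gmn m (n - k) 1 μ = a * Gmn m n 1 μ + β ∧
      deriv (fun x => (n.choose k : ℝ) * Gmn m (n - k) 1 x) μ
        = a * deriv (fun x => Gmn m n 1 x) μ ∧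
      Γ = a * Gmn m n 1 y + β) ↔
    (a = n.choose k / (μ + 1) ^ k ∧ β = n.choose k * Gmn m (n - k) 1 μ - a * Gmn m n 1 μ ∧
      tangentValue m n k y μ = Γ) := by
  have hμ1 : (μ + 1) ^ k ≠ 0 := pow_ne_zero k (by linarith)
  have hderiv : deriv (fun x => (n.choose k : ℝ) * Gmn m (n - k) 1 x) μ
      = a * deriv (fun x => Gmn m n 1 x) μ ↔ a = n.choose k / (μ + 1) ^ k := by
    have hw : 0 < μ ^ m * (μ + 1) ^ (n - k) := by positivity
    rw [((hasDerivAt_Gmn m (n - k) 1 μ).const_mul _).deriv, (hasDerivAt_Gmn m n 1 μ).deriv,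
      eq_div_iff hμ1, ← pow_sub_mul_pow _ hkn]
    constructor
    · exact fun h => mul_right_cancel₀ hw.ne' (by linear_combination -h)
    · intro h
      linear_combination -(μ ^ m * (μ + 1) ^ (n - k)) * h
  constructor
  · rintro ⟨h1, h2, h3⟩
    have ha := hderiv.1 h2
    refine ⟨ha, by linarith, ?_⟩
    rw [tangentValue, h3, show β = n.choose k * Gmn m (n - k) 1 μ - a * Gmn m n 1 μ by linarith,
      ha]
    ring
  · rintro ⟨ha, hβ, hΓ⟩
    refine ⟨by rw [hβ]; ring, hderiv.2 ha, ?_⟩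
    rw [← hΓ, tangentValue, hβ, ha]
    ring

/-- if `α < C(n,k)`, there is a unique triple `(α̃, β̃, λ)` with `λ ∈ (0, b')`
solving `a₀(λ) = α̃ G(λ) + β̃`, `a₀'(λ) = α̃ G'(λ)` and `G^{m,n,k}_1(b,b') = α̃ G(b') + β̃`,
where `a₀(x) = C(n,k) G^{m,n−k}_1(x)`. -/
theorem stmt_15 (m n k : ℕ) (hk : 1 ≤ k) (hkn : k ≤ n) (b b' : ℝ) (hb : 0 < b) (hb' : 0 < b')
    (α : ℝ) (hα : α = Gmnk m n k b b' / Gmn m n 1 b')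
    (hsmall : α < (Nat.choose n k : ℝ)) :
    ∃! p : ℝ × ℝ × ℝ,
      p.2.2 ∈ Set.Ioo (0 : ℝ) b' ∧
      (Nat.choose n k : ℝ) * Gmn m (n - k) 1 p.2.2 = p.1 * Gmn m n 1 p.2.2 + p.2.1 ∧
      deriv (fun x => (Nat.choose n k : ℝ) * Gmn m (n - k) 1 x) p.2.2
        = p.1 * deriv (fun x => Gmn m n 1 x) p.2.2 ∧
      Gmnk m n k b b' = p.1 * Gmn m n 1 b' + p.2.1 := by
  have hupper : Gmnk m n k b b' < n.choose k * Gmn m n 1 b' := by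
    rwa [hα, div_lt_iff₀ (Gmn_one_pos m n hb')] at hsmall
  obtain ⟨lam, hlam, hval⟩ : ∃ lam ∈ Ioo 0 b', tangentValue m n k b' lam = Gmnk m n k b b' := by
    refine intermediate_value_Ioo' hb'.le
      ((continuousOn_tangentValue hkn b').mono Icc_subset_Ici_self) ?_
    rw [tangentValue_zero, tangentValue_self]
    exact ⟨choose_mul_Gmn_lt_Gmnk hk hkn hb hb', hupper⟩
  set a : ℝ := n.choose k / (lam + 1) ^ k
  refine ⟨(a, n.choose k * Gmn m (n - k) 1 lam - a * Gmn m n 1 lam, lam),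
    ⟨hlam, (tangent_system_iff hkn hlam.1).2 ⟨rfl, rfl, hval⟩⟩, ?_⟩
  rintro ⟨a', β, μ⟩ ⟨hμ, hsys⟩
  dsimp only at hμ hsys
  obtain ⟨rfl, rfl, hμval⟩ := (tangent_system_iff hkn hμ.1).1 hsys
  obtain rfl : μ = lam := (strictAntiOn_tangentValue hk hkn b').injOn (Ioo_subset_Icc_self hμ)
    (Ioo_subset_Icc_self hlam) (hμval.trans hval.symm)
  rfl
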